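/- arXiv:1705.02319 — 3 statements merged into one kernel-verified Lean document; each statement's English description precedes it below -/
import Mathlib

section
/- Consider the planar system ẋ = (1/τ₁)·sin(2θ), θ̇ = ω − K·(x + (τ₂/τ₁)·sin(2θ)) with τ₁ > 0, τ₂ > 0, K > 0, and the function V(x, θ) = (K·τ₁/2)·(x − ω/K)² + ∫₀^θ sin(2s) ds. Then along any solution (x(t), θ(t)), the derivative of t ↦ V(x(t), θ(t)) equals −(K·τ₂/τ₁)·sin²(2θ(t)), and in particular is ≤ 0. -/
open Real

/- The filter and phase contributions carry the cross terms `± K (x - ω / K) φ(θ)`, which cancel;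
only the damping `-(K τ₂ / τ₁) φ(θ)²` of the proportional path survives. -/
theorem hasDerivAt_piLoop_energy {τ₁ τ₂ K ω t : ℝ} {φ x θ : ℝ → ℝ} (hφ : Continuous φ)
    (hτ₁ : τ₁ ≠ 0) (hK : K ≠ 0)
    (hx : HasDerivAt x (1 / τ₁ * φ (θ t)) t)
    (hθ : HasDerivAt θ (ω - K * (x t + τ₂ / τ₁ * φ (θ t))) t) :
    HasDerivAt (fun t => K * τ₁ / 2 * (x t - ω / K) ^ 2 + ∫ s in (0:ℝ)..θ t, φ s)
      (-(K * τ₂ / τ₁) * φ (θ t) ^ 2) t := by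
  have hfilter := ((hx.sub_const (ω / K)).pow 2).const_mul (K * τ₁ / 2)
  have hphase := (hφ.integral_hasStrictDerivAt 0 (θ t)).hasDerivAt.comp t hθ
  refine (hfilter.add hphase).congr_deriv ?_
  simp only [show (2:ℕ) - 1 = 1 from rfl, pow_one]
  field_simp
  ring

theorem costas_lyapunov_derivative
    (τ₁ τ₂ K ω : ℝ) (hτ₁ : 0 < τ₁) (hτ₂ : 0 < τ₂) (hK : 0 < K)
    (x θ : ℝ → ℝ)
    (hx : ∀ t, HasDerivAt x ((1/τ₁) * Real.sin (2 * θ t)) t)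
    (hθ : ∀ t, HasDerivAt θ (ω - K * (x t + (τ₂/τ₁) * Real.sin (2 * θ t))) t)
    (V : ℝ → ℝ → ℝ)
    (hV : V = fun x θ => K * τ₁ / 2 * (x - ω/K)^2 + ∫ s in (0:ℝ)..θ, Real.sin (2*s)) :
    ∀ t, HasDerivAt (fun t => V (x t) (θ t))
        (-(K * τ₂ / τ₁) * (Real.sin (2 * θ t))^2) t ∧
      -(K * τ₂ / τ₁) * (Real.sin (2 * θ t))^2 ≤ 0 := by
  intro t
  subst hV
  have hsin : Continuous fun s : ℝ => Real.sin (2 * s) := by fun_prop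
  exact ⟨hasDerivAt_piLoop_energy hsin hτ₁.ne' hK.ne' (hx t) (hθ t),
    mul_nonpos_of_nonpos_of_nonneg (neg_nonpos.mpr (by positivity)) (sq_nonneg _)⟩
end

section
/- For the system ẋ = (1/τ₁)·sin(2θ), θ̇ = ω − K·(x + (τ₂/τ₁)·sin(2θ)) with τ₁, τ₂, K > 0, if a solution (x(t), θ(t)) satisfies sin(2θ(t)) = 0 for all t in a nontrivial interval, then the solution is constant on that interval (i.e., it is an equilibrium). -/
/-!
On the zero set of `sin (2θ)` the phase `2θ` takes values in the discrete set `πℤ`, so a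
continuous phase is constant on any interval spent there. Then `ẋ = sin (2θ) / τ₁` vanishes on
the interval, so `x` is constant too.
-/

open Real Set

theorem Real.isDiscrete_setOf_sin_eq_zero : IsDiscrete {y : ℝ | sin y = 0} := by
  have hzeros : {y : ℝ | sin y = 0} = AddSubgroup.zmultiples π := by
    ext y
    simp [sin_eq_zero_iff, AddSubgroup.mem_zmultiples_iff]
  rw [hzeros, SetLike.isDiscrete_iff_discreteTopology]
  infer_instance

theorem IsPreconnected.eq_of_sin_eq_zero {α : Type*} [TopologicalSpace α] {s : Set α}
    (hs : IsPreconnected s) {f : α → ℝ} (hf : ContinuousOn f s) (hzero : ∀ t ∈ s, sin (f t) = 0)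
    {x y : α} (hx : x ∈ s) (hy : y ∈ s) : f x = f y :=
  hs.constant_of_mapsTo Real.isDiscrete_setOf_sin_eq_zero hf hzero hx hy

theorem eq_left_of_hasDerivAt_eq_zero_on_Icc {E : Type*} [NormedAddCommGroup E]
    [NormedSpace ℝ E] {f f' : ℝ → E} {a b : ℝ} (hf : ∀ t ∈ Icc a b, HasDerivAt f (f' t) t)
    (hzero : ∀ t ∈ Icc a b, f' t = 0) : ∀ t ∈ Icc a b, f t = f a := by
  refine constant_of_has_deriv_right_zero
    (fun t ht => (hf t ht).continuousAt.continuousWithinAt) fun t ht => ?_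
  have ht' : t ∈ Icc a b := Ico_subset_Icc_self ht
  simpa only [hzero t ht'] using (hf t ht').hasDerivWithinAt

theorem costas_no_nontrivial_trajectory_in_zero_set_general
    (τ₁ τ₂ K ω : ℝ)
    (x θ : ℝ → ℝ) (a b : ℝ)
    (hx : ∀ t, HasDerivAt x ((1/τ₁) * Real.sin (2 * θ t)) t)
    (hθ : ∀ t, HasDerivAt θ (ω - K * (x t + (τ₂/τ₁) * Real.sin (2 * θ t))) t)
    (hzero : ∀ t ∈ Set.Icc a b, Real.sin (2 * θ t) = 0) :
    ∀ t ∈ Set.Icc a b, x t = x a ∧ θ t = θ a := by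
  have hθ_cont : Continuous θ := continuous_iff_continuousAt.2 fun t => (hθ t).continuousAt
  have hθ_const : ∀ t ∈ Icc a b, 2 * θ t = 2 * θ a := fun t ht =>
    isPreconnected_Icc.eq_of_sin_eq_zero (f := fun t => 2 * θ t)
      (continuous_const.mul hθ_cont).continuousOn hzero ht ⟨le_rfl, ht.1.trans ht.2⟩
  have hx_const : ∀ t ∈ Icc a b, x t = x a :=
    eq_left_of_hasDerivAt_eq_zero_on_Icc (fun t _ => hx t) fun t ht => by
      rw [hzero t ht, mul_zero]
  exact fun t ht => ⟨hx_const t ht, by linarith [hθ_const t ht]⟩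

theorem costas_no_nontrivial_trajectory_in_zero_set
    (τ₁ τ₂ K ω : ℝ) (hτ₁ : 0 < τ₁) (hτ₂ : 0 < τ₂) (hK : 0 < K)
    (x θ : ℝ → ℝ) (a b : ℝ) (hab : a < b)
    (hx : ∀ t, HasDerivAt x ((1/τ₁) * Real.sin (2 * θ t)) t)
    (hθ : ∀ t, HasDerivAt θ (ω - K * (x t + (τ₂/τ₁) * Real.sin (2 * θ t))) t)
    (hzero : ∀ t ∈ Set.Icc a b, Real.sin (2 * θ t) = 0) :
    ∀ t ∈ Set.Icc a b, x t = x a ∧ θ t = θ a :=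
  costas_no_nontrivial_trajectory_in_zero_set_general τ₁ τ₂ K ω x θ a b hx hθ hzero
end

section
/- Consider the system ẋ = (1/τ₁)·sin(2θ), θ̇ = ω − K·(x + (τ₂/τ₁)·sin(2θ)) with τ₁, τ₂, K > 0 and any ω ∈ ℝ. Every solution is bounded in the x-coordinate: there exists C (depending on the initial condition) such that |x(t) − ω/K| ≤ C for all t ≥ 0. -/
/-! The energy `V = (K τ₁ / 2) (x - ω / K)² + (1 - cos 2θ) / 2` decreases along solutions, with
`V̇ = -(K τ₂ / τ₁) sin² 2θ`, and it dominates `(K τ₁ / 2) (x - ω / K)²`; so `(x t - ω / K)²` stays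
below `2 V(0) / (K τ₁)` for `t ≥ 0`. -/

open Real

noncomputable def costasLyapunov (K τ₁ ω x θ : ℝ) : ℝ :=
  K * τ₁ / 2 * (x - ω / K) ^ 2 + (1 - cos (2 * θ)) / 2

lemma le_costasLyapunov (K τ₁ ω x θ : ℝ) :
    K * τ₁ / 2 * (x - ω / K) ^ 2 ≤ costasLyapunov K τ₁ ω x θ := by
  have := cos_le_one (2 * θ)
  unfold costasLyapunov
  linarith

lemma hasDerivAt_costasLyapunov {τ₁ τ₂ K ω : ℝ} (hτ₁ : τ₁ ≠ 0) (hK : K ≠ 0) {x θ : ℝ → ℝ}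
    (hx : ∀ t, HasDerivAt x ((1/τ₁) * sin (2 * θ t)) t)
    (hθ : ∀ t, HasDerivAt θ (ω - K * (x t + (τ₂/τ₁) * sin (2 * θ t))) t) (t : ℝ) :
    HasDerivAt (fun t ↦ costasLyapunov K τ₁ ω (x t) (θ t))
      (-(K * τ₂ / τ₁) * sin (2 * θ t) ^ 2) t := by
  have hquad := (((hx t).sub_const (ω / K)).pow 2).const_mul (K * τ₁ / 2)
  have hcos := ((hasDerivAt_cos (2 * θ t)).comp t ((hθ t).const_mul 2)).const_sub 1 |>.div_const 2
  refine (hquad.add hcos).congr_deriv ?_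
  simp only [Nat.cast_ofNat, Nat.reduceSub, pow_one]
  field_simp
  ring

theorem costas_solutions_bounded_in_x
    (τ₁ τ₂ K ω : ℝ) (hτ₁ : 0 < τ₁) (hτ₂ : 0 < τ₂) (hK : 0 < K)
    (x θ : ℝ → ℝ)
    (hx : ∀ t, HasDerivAt x ((1/τ₁) * Real.sin (2 * θ t)) t)
    (hθ : ∀ t, HasDerivAt θ (ω - K * (x t + (τ₂/τ₁) * Real.sin (2 * θ t))) t) :
    ∃ C : ℝ, ∀ t : ℝ, 0 ≤ t → |x t - ω / K| ≤ C := by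
  set V := fun t ↦ costasLyapunov K τ₁ ω (x t) (θ t)
  have hV_anti : Antitone V :=
    antitone_of_hasDerivAt_nonpos (f' := fun t ↦ -(K * τ₂ / τ₁) * sin (2 * θ t) ^ 2)
      (hasDerivAt_costasLyapunov hτ₁.ne' hK.ne' hx hθ) fun t ↦ by
        simp only [Pi.zero_apply, neg_mul, neg_nonpos]
        positivity
  refine ⟨√(2 * V 0 / (K * τ₁)), fun t ht ↦ abs_le_sqrt ?_⟩
  rw [le_div_iff₀ (by positivity)]
  nlinarith [le_costasLyapunov K τ₁ ω (x t) (θ t), hV_anti ht]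
end
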